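/- If J is generated as an A-module by a family {j_λ | λ ∈ Λ}, then the ring homomorphism φ : A[X_λ | λ ∈ Λ] → A ⋈^f J determined by φ(a) = (a, f(a)) for a ∈ A and φ(X_λ) = (0, j_λ) is surjective; hence A ⋈^f J is a homomorphic image of a polynomial ring over A. -/

import Mathlib

set_option synthInstance.maxHeartbeats 1000000
set_option maxHeartbeats 1000000
/-- The amalgamation `A ⋈^f J` of `A` with `B` along `J` with respect to `f`,
as a subring of `A × B`. -/
def Amalg {A B : Type*} [CommRing A] [CommRing B] (f : A →+* B) (J : Ideal B) :
    Subring (A × B) where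
  carrier := {p | ∃ a : A, ∃ j ∈ J, p = (a, f a + j)}
  zero_mem' := ⟨0, 0, J.zero_mem, by simp; rfl⟩
  one_mem' := ⟨1, 0, J.zero_mem, by simp; rfl⟩
  add_mem' := by
    rintro _ _ ⟨a, j, hj, rfl⟩ ⟨a', j', hj', rfl⟩
    exact ⟨a + a', j + j', J.add_mem hj hj', by simp [Prod.ext_iff]; ring⟩
  neg_mem' := by
    rintro _ ⟨a, j, hj, rfl⟩
    exact ⟨-a, -j, J.neg_mem hj, by simp [Prod.ext_iff]; ring⟩
  mul_mem' := by
    rintro _ _ ⟨a, j, hj, rfl⟩ ⟨a', j', hj', rfl⟩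
    refine ⟨a * a', f a * j' + f a' * j + j * j',
      J.add_mem (J.add_mem (J.mul_mem_left _ hj') (J.mul_mem_left _ hj))
        (J.mul_mem_left _ hj'), by simp [Prod.ext_iff]; ring⟩

/-- The amalgamation as a subalgebra of `A × B`, when `B` is an `A`-algebra. -/
def AmalgA (A : Type*) {B : Type*} [CommRing A] [CommRing B] [Algebra A B] (J : Ideal B) :
    Subalgebra A (A × B) :=
  { Amalg (algebraMap A B) J with
    algebraMap_mem' := fun a => ⟨a, 0, J.zero_mem, by simp⟩ }

/-!
Every element of `A ⋈ J` splits as `(a, f a) + (0, b)` with `b ∈ J`. Since `b ↦ (0, b)` is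
`A`-linear, the elements `(0, b)` lie in the `A`-span of the `(0, j_λ)`; hence `A ⋈ J` is generated
as an `A`-algebra by the `(0, j_λ)`, which is exactly surjectivity of the evaluation map
`A[X_λ] → A ⋈ J`, `X_λ ↦ (0, j_λ)`.
-/

theorem MvPolynomial.aeval_surjective_of_adjoin_eq {R S : Type*} [CommSemiring R]
    [CommSemiring S] [Algebra R S] {T : Subalgebra R S} {Λ : Type*} (g : Λ → T)
    (h : Algebra.adjoin R (Set.range fun l => (g l : S)) = T) :
    Function.Surjective (MvPolynomial.aeval (R := R) g) := by
  intro x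
  obtain ⟨p, hp⟩ : (x : S) ∈ (MvPolynomial.aeval (R := R) fun l => (g l : S)).range := by
    rw [MvPolynomial.aeval_range, h]
    exact x.2
  refine ⟨p, Subtype.ext ?_⟩
  rw [← hp, ← T.val_apply, ← AlgHom.comp_apply, MvPolynomial.comp_aeval]
  rfl

section AmalgA

variable {A B : Type*} [CommRing A] [CommRing B] [Algebra A B] {J : Ideal B}

theorem zero_mk_mem_AmalgA {b : B} (hb : b ∈ J) : ((0, b) : A × B) ∈ AmalgA A J :=
  ⟨0, b, hb, by simp⟩

theorem zero_mk_mem_adjoin_of_span_eq {Λ : Type*} {j : Λ → B}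
    (hgen : Submodule.span A (Set.range j) = Submodule.restrictScalars A J) {b : B} (hb : b ∈ J) :
    ((0, b) : A × B) ∈ Algebra.adjoin A (Set.range fun l => ((0, j l) : A × B)) := by
  have hb' : b ∈ Submodule.span A (Set.range j) := hgen ▸ hb
  have hspan := Submodule.mem_map_of_mem (f := LinearMap.inr A A B) hb'
  rw [Submodule.map_span, ← Set.range_comp] at hspan
  exact Algebra.span_le_adjoin A _ hspan

theorem AmalgA_eq_adjoin {Λ : Type*} {j : Λ → B} (hjJ : ∀ l, j l ∈ J)
    (hgen : Submodule.span A (Set.range j) = Submodule.restrictScalars A J) :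
    Algebra.adjoin A (Set.range fun l => ((0, j l) : A × B)) = AmalgA A J := by
  refine le_antisymm (Algebra.adjoin_le ?_) ?_
  · rintro _ ⟨l, rfl⟩
    exact zero_mk_mem_AmalgA (hjJ l)
  · rintro _ ⟨a, b, hb, rfl⟩
    have hsplit : ((a, algebraMap A B a + b) : A × B) = algebraMap A (A × B) a + (0, b) := by
      simp
    rw [hsplit]
    exact add_mem (Subalgebra.algebraMap_mem _ a) (zero_mk_mem_adjoin_of_span_eq hgen hb)

end AmalgA

/-- If `J` is generated as an `A`-module by `{j_λ}`, then `A ⋈^f J` is a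
homomorphic image of the polynomial ring `A[X_λ | λ ∈ Λ]`, via the map sending
`a ↦ (a, f a)` and `X_λ ↦ (0, j_λ)`. -/
theorem amalgamation_quotient_of_polynomialRing {A B : Type*} [CommRing A] [CommRing B]
    [Algebra A B] (J : Ideal B) {Λ : Type*} (j : Λ → B) (hjJ : ∀ l, j l ∈ J)
    (hgen : Submodule.span A (Set.range j) = Submodule.restrictScalars A J) :
    ∃ φ : MvPolynomial Λ A →+* AmalgA A J,
      (∀ a : A, (φ (MvPolynomial.C a) : A × B) = (a, algebraMap A B a)) ∧
      (∀ l : Λ, (φ (MvPolynomial.X l) : A × B) = (0, j l)) ∧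
      Function.Surjective φ := by
  let g : Λ → AmalgA A J := fun l => ⟨(0, j l), zero_mk_mem_AmalgA (hjJ l)⟩
  refine ⟨(MvPolynomial.aeval g).toRingHom, fun a => ?_, fun l => ?_,
    MvPolynomial.aeval_surjective_of_adjoin_eq g (AmalgA_eq_adjoin hjJ hgen)⟩
  · simp
  · simp [g]
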